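/- Let (X,d) be a proper geodesic metric space and let ν be a Borel measure on X whose support is all of X and which is finite on bounded sets, satisfying the Bishop–Gromov inequality with parameters (K,N), where K ≤ 0 and 1 < N < ∞. Suppose the non-collapsing condition holds: there exist r₀, V₀, V₁ > 0 with V₀ ≤ ν(B(x,r₀)) ≤ V₁ for all x ∈ X. Let ε > 0, let 𝒩 be a maximal ε-separated net in X with discretization graph G(𝒩), and fix basepoints x₀ ∈ X and p₀ ∈ 𝒩. Then (X,d,ν) has polynomial volume growth if and only if G(𝒩) has polynomial growth. -/

import Mathlib

open MeasureTheory Metric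

/-- The model volume density `S_K^N` for `K ≤ 0`, `1 < N < ∞`. -/
noncomputable def SKN (K N t : ℝ) : ℝ :=
  if K = 0 then t ^ (N - 1)
  else Real.sinh (Real.sqrt (|K| / (N - 1)) * t) ^ (N - 1)

/-- A Borel measure `ν` of full support satisfies the Bishop–Gromov inequality with
parameters `(K, N)` if for every `x` the function
`r ↦ ν(B(x,r)) / ∫₀^r S_K^N(t) dt` is nonincreasing on `(0, ∞)`. -/
def BishopGromov {X : Type*} [MetricSpace X] [MeasurableSpace X]
    (ν : Measure X) (K N : ℝ) : Prop :=
  ∀ x : X, AntitoneOn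
    (fun r => (ν (ball x r)).toReal / ∫ t in (0:ℝ)..r, SKN K N t) (Set.Ioi 0)

/-- A metric space is geodesic if every pair of points is joined by a geodesic
(an isometric image of a real interval). -/
def IsGeodesicSpace (X : Type*) [MetricSpace X] : Prop :=
  ∀ x y : X, ∃ f : ℝ → X, f 0 = x ∧ f (dist x y) = y ∧
    ∀ s ∈ Set.Icc (0:ℝ) (dist x y), ∀ t ∈ Set.Icc (0:ℝ) (dist x y),
      dist (f s) (f t) = |s - t|

/-- A subset `𝒩` of a metric space is `ε`-separated if distinct points of `𝒩` are at
distance at least `ε`. -/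
def IsSeparated {X : Type*} [MetricSpace X] (𝒩 : Set X) (ε : ℝ) : Prop :=
  ∀ p ∈ 𝒩, ∀ q ∈ 𝒩, p ≠ q → ε ≤ dist p q

/-- A maximal `ε`-separated net: an `ε`-separated set maximal with respect to inclusion. -/
def IsMaximalNet {X : Type*} [MetricSpace X] (𝒩 : Set X) (ε : ℝ) : Prop :=
  IsSeparated 𝒩 ε ∧ ∀ M : Set X, 𝒩 ⊆ M → IsSeparated M ε → M = 𝒩

/-- The discretization graph `G(𝒩)`: vertices are points of `𝒩`, and distinct `p, q`
are adjacent iff `B(p,ε) ∩ B(q,ε) ≠ ∅`, equivalently `dist p q < 2ε`. -/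
def netGraph {X : Type*} [MetricSpace X] (𝒩 : Set X) (ε : ℝ) : SimpleGraph 𝒩 where
  Adj p q := p ≠ q ∧ dist (p : X) (q : X) < 2 * ε
  symm := by
    constructor
    intro p q h
    exact ⟨h.1.symm, by rw [dist_comm]; exact h.2⟩
  loopless := by
    constructor
    intro p h
    exact h.1 rfl

/-- A connected graph with basepoint `v₀` has polynomial growth if the cardinality of
combinatorial balls is eventually bounded by `C·r^k`. -/
def GraphPolyGrowth {V : Type*} (G : SimpleGraph V) (v₀ : V) : Prop :=
  ∃ C > (0:ℝ), ∃ k > (0:ℝ), ∃ r₁ > (0:ℝ), ∀ r : ℝ, r₁ ≤ r →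
    (({v : V | (G.dist v₀ v : ℝ) ≤ r}.ncard : ℝ)) ≤ C * r ^ k

/-- A connected graph with basepoint `v₀` has exponential growth if
`limsup_{r→∞} (1/r)·log #{v : 𝐝(v₀,v) ≤ r} > 0`. -/
def GraphExpGrowth {V : Type*} (G : SimpleGraph V) (v₀ : V) : Prop :=
  0 < Filter.limsup
    (fun r : ℝ => Real.log (({v : V | (G.dist v₀ v : ℝ) ≤ r}.ncard : ℝ)) / r)
    Filter.atTop

/-- A metric measure space with basepoint `x₀` has polynomial volume growth if
`ν(B(x₀,r)) ≤ C·r^k` for all sufficiently large `r`. -/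
def VolumePolyGrowth {X : Type*} [MetricSpace X] [MeasurableSpace X]
    (ν : Measure X) (x₀ : X) : Prop :=
  ∃ C > (0:ℝ), ∃ k > (0:ℝ), ∃ r₁ > (0:ℝ), ∀ r : ℝ, r₁ ≤ r →
    (ν (ball x₀ r)).toReal ≤ C * r ^ k

/-- A metric measure space with basepoint `x₀` has exponential volume growth if
`limsup_{r→∞} (1/r)·log ν(B(x₀,r)) > 0`. -/
def VolumeExpGrowth {X : Type*} [MetricSpace X] [MeasurableSpace X]
    (ν : Measure X) (x₀ : X) : Prop :=
  0 < Filter.limsup (fun r : ℝ => Real.log (ν (ball x₀ r)).toReal / r) Filter.atTop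

/-!
Bishop–Gromov comparison turns the non-collapsing bounds at the single radius `r₀` into uniform
upper and lower bounds on `ν (ball x r)` for every fixed `r > 0`. The disjoint balls `B(p, ε/2)`,
`p ∈ 𝒩`, then bound the number of net points in a ball of radius `R` by a multiple of
`ν(B(x, R + ε/2))`, and the balls `B(p, ε)` around the net points of `B(x, R + ε)` cover
`B(x, R)`. An edge of `G(𝒩)` has length `< 2ε`; conversely, following a geodesic and always
jumping to a net point near the place where the path last leaves the current `ε`-ball gives a walk
through distinct net points of the `ε`-tube around the geodesic, and that tube contains linearly
many net points in its length. So graph balls and metric balls are comparable up to affine changes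
of the radius, which preserve polynomial bounds.
-/

section ModelVolume

variable {K N : ℝ}

lemma SKN_monotoneOn (hN : 1 < N) : MonotoneOn (SKN K N) (Set.Ici 0) := by
  intro a ha b hb hab
  have hN' : 0 ≤ N - 1 := by linarith
  unfold SKN
  split_ifs
  · exact Real.rpow_le_rpow ha hab hN'
  · refine Real.rpow_le_rpow (Real.sinh_nonneg_iff.2 (mul_nonneg (Real.sqrt_nonneg _) ha)) ?_ hN'
    exact Real.sinh_le_sinh.2 (mul_le_mul_of_nonneg_left hab (Real.sqrt_nonneg _))

lemma SKN_pos (hN : 1 < N) {t : ℝ} (ht : 0 < t) : 0 < SKN K N t := by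
  unfold SKN
  split_ifs with hK
  · exact Real.rpow_pos_of_pos ht _
  · have : 0 < Real.sqrt (|K| / (N - 1)) :=
      Real.sqrt_pos.2 (div_pos (abs_pos.2 hK) (by linarith))
    exact Real.rpow_pos_of_pos (Real.sinh_pos_iff.2 (mul_pos this ht)) _

lemma integral_SKN_pos (hN : 1 < N) {r : ℝ} (hr : 0 < r) : 0 < ∫ t in (0:ℝ)..r, SKN K N t := by
  refine intervalIntegral.intervalIntegral_pos_of_pos_on ?_ (fun t ht => SKN_pos hN ht.1) hr
  refine ((SKN_monotoneOn hN).mono ?_).intervalIntegrable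
  rw [Set.uIcc_of_le hr.le]
  exact fun t ht => ht.1

end ModelVolume

section BishopGromov

variable {X : Type*} [MetricSpace X] [MeasurableSpace X] {ν : Measure X} {K N : ℝ}

lemma measure_ball_toReal_mono (hbdd : ∀ s : Set X, Bornology.IsBounded s → ν s < ⊤) (x : X)
    {r R : ℝ} (hrR : r ≤ R) : (ν (ball x r)).toReal ≤ (ν (ball x R)).toReal :=
  ENNReal.toReal_mono (hbdd _ isBounded_ball).ne (measure_mono (ball_subset_ball hrR))

lemma BishopGromov.measure_ball_le (hBG : BishopGromov ν K N) (hN : 1 < N) (x : X) {r R : ℝ}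
    (hr : 0 < r) (hrR : r ≤ R) :
    (ν (ball x R)).toReal ≤
      (∫ t in (0:ℝ)..R, SKN K N t) / (∫ t in (0:ℝ)..r, SKN K N t) * (ν (ball x r)).toReal := by
  have hIR := integral_SKN_pos (K := K) hN (hr.trans_le hrR)
  have h := hBG x hr (hr.trans_le hrR) hrR
  simp only at h
  rw [div_le_div_iff₀ hIR (integral_SKN_pos hN hr)] at h
  rw [div_mul_eq_mul_div, le_div_iff₀ (integral_SKN_pos hN hr)]
  linarith

lemma BishopGromov.exists_pos_le_measure_ball (hbdd : ∀ s : Set X, Bornology.IsBounded s → ν s < ⊤)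
    (hBG : BishopGromov ν K N) (hN : 1 < N) {r₀ V₀ : ℝ} (hr₀ : 0 < r₀) (hV₀ : 0 < V₀)
    (hV₀le : ∀ x : X, V₀ ≤ (ν (ball x r₀)).toReal) {r : ℝ} (hr : 0 < r) :
    ∃ m > 0, ∀ x : X, m ≤ (ν (ball x r)).toReal := by
  set r' := min r r₀
  have hr' : 0 < r' := lt_min hr hr₀
  set I := fun ρ : ℝ => ∫ t in (0:ℝ)..ρ, SKN K N t
  have hI : ∀ ρ > 0, 0 < I ρ := fun ρ hρ => integral_SKN_pos hN hρ
  refine ⟨V₀ * (I r' / I r₀), mul_pos hV₀ (div_pos (hI r' hr') (hI r₀ hr₀)), fun x => ?_⟩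
  have h := hBG.measure_ball_le hN x hr' (min_le_right r r₀)
  calc V₀ * (I r' / I r₀) ≤ I r₀ / I r' * (ν (ball x r')).toReal * (I r' / I r₀) := by
        have := (hI r' hr').le
        have := (hI r₀ hr₀).le
        gcongr
        exact (hV₀le x).trans h
    _ = (ν (ball x r')).toReal := by field_simp [(hI r' hr').ne', (hI r₀ hr₀).ne']
    _ ≤ (ν (ball x r)).toReal := measure_ball_toReal_mono hbdd x (min_le_left r r₀)

lemma BishopGromov.exists_measure_ball_le (hbdd : ∀ s : Set X, Bornology.IsBounded s → ν s < ⊤)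
    (hBG : BishopGromov ν K N) (hN : 1 < N) {r₀ V₁ : ℝ} (hr₀ : 0 < r₀)
    (hV₁le : ∀ x : X, (ν (ball x r₀)).toReal ≤ V₁) (R : ℝ) :
    ∃ M, ∀ x : X, (ν (ball x R)).toReal ≤ M := by
  set R' := max R r₀
  set I := fun ρ : ℝ => ∫ t in (0:ℝ)..ρ, SKN K N t
  have hI : 0 ≤ I R' / I r₀ :=
    div_nonneg (integral_SKN_pos hN (hr₀.trans_le (le_max_right R r₀))).le
      (integral_SKN_pos hN hr₀).le
  refine ⟨I R' / I r₀ * V₁, fun x => ?_⟩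
  calc (ν (ball x R)).toReal ≤ (ν (ball x R')).toReal :=
        measure_ball_toReal_mono hbdd x (le_max_left R r₀)
    _ ≤ I R' / I r₀ * (ν (ball x r₀)).toReal := hBG.measure_ball_le hN x hr₀ (le_max_right R r₀)
    _ ≤ I R' / I r₀ * V₁ := by gcongr; exact hV₁le x

end BishopGromov

theorem SimpleGraph.exists_walk_length_le_ncard_of_ascending {V α : Type*} [Preorder α]
    (G : SimpleGraph V) {T : Set V} (hT : T.Finite) (φ : V → α) {v : V}
    (hstep : ∀ w ∈ T, w ≠ v → G.Adj w v ∨ ∃ w' ∈ T, G.Adj w w' ∧ φ w < φ w')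
    {w : V} (hw : w ∈ T) : ∃ W : G.Walk w v, W.length ≤ T.ncard := by
  suffices key : ∀ n, ∀ w ∈ T, {u ∈ T | φ w ≤ φ u}.ncard = n → ∃ W : G.Walk w v, W.length ≤ n by
    obtain ⟨W, hW⟩ := key _ w hw rfl
    exact ⟨W, hW.trans (Set.ncard_le_ncard (Set.sep_subset _ _) hT)⟩
  intro n
  induction n using Nat.strong_induction_on with
  | _ n ih =>
    intro w hw hn
    have hfin : {u ∈ T | φ w ≤ φ u}.Finite := hT.subset (Set.sep_subset _ _)
    have hpos : 0 < n := hn ▸ (Set.ncard_pos hfin).2 ⟨w, hw, le_rfl⟩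
    by_cases hwv : w = v
    · subst hwv
      exact ⟨.nil, by simp⟩
    rcases hstep w hw hwv with hadj | ⟨w', hw', hadj, hlt⟩
    · exact ⟨.cons hadj .nil, by simp only [SimpleGraph.Walk.length_cons,
        SimpleGraph.Walk.length_nil]; omega⟩
    have hssub : {u ∈ T | φ w' ≤ φ u} ⊂ {u ∈ T | φ w ≤ φ u} :=
      ⟨fun u hu => ⟨hu.1, hlt.le.trans hu.2⟩, fun h => (h ⟨hw, le_rfl⟩).2.not_gt hlt⟩
    have hcard : {u ∈ T | φ w' ≤ φ u}.ncard < n := hn ▸ Set.ncard_lt_ncard hssub hfin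
    obtain ⟨W, hW⟩ := ih _ hcard w' hw' rfl
    exact ⟨.cons hadj W, by rw [SimpleGraph.Walk.length_cons]; omega⟩

section Net

variable {X : Type*} [MetricSpace X] {𝒩 : Set X} {ε : ℝ}

lemma IsMaximalNet.exists_dist_lt (hnet : IsMaximalNet 𝒩 ε) (hε : 0 < ε) (x : X) :
    ∃ p ∈ 𝒩, dist x p < ε := by
  by_cases hx : x ∈ 𝒩
  · exact ⟨x, hx, by simpa using hε⟩
  by_contra! hfar
  have hsep : IsSeparated (insert x 𝒩) ε := by
    rintro p (rfl | hp) q (rfl | hq) hpq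
    · exact absurd rfl hpq
    · exact hfar q hq
    · exact dist_comm p q ▸ hfar p hp
    · exact hnet.1 p hp q hq hpq
  exact hx (hnet.2 _ (Set.subset_insert x 𝒩) hsep ▸ Set.mem_insert x 𝒩)

lemma dist_le_of_netGraph_walk {p q : 𝒩} (W : (netGraph 𝒩 ε).Walk p q) :
    dist (p : X) q ≤ 2 * ε * W.length := by
  induction W with
  | nil => simp
  | @cons u w r hadj W ih =>
    rw [SimpleGraph.Walk.length_cons, Nat.cast_add_one]
    linarith [dist_triangle (u : X) w r, hadj.2]

lemma measure_ball_le_ncard_mul [MeasurableSpace X] {ν : Measure X}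
    (hcov : ∀ x : X, ∃ p ∈ 𝒩, dist x p < ε)
    (hbdd : ∀ s : Set X, Bornology.IsBounded s → ν s < ⊤) {M : ℝ}
    (hM : ∀ p : X, (ν (ball p ε)).toReal ≤ M) (x : X) {R : ℝ}
    (hfin : (𝒩 ∩ closedBall x (R + ε)).Finite) :
    (ν (ball x R)).toReal ≤ (𝒩 ∩ closedBall x (R + ε)).ncard * M := by
  set t := hfin.toFinset
  have hcover : ball x R ⊆ ⋃ p ∈ t, ball p ε := fun y hy => by
    obtain ⟨p, hp, hyp⟩ := hcov y
    have hpx : dist p x ≤ R + ε := by linarith [dist_triangle p y x, dist_comm p y, mem_ball.1 hy]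
    exact Set.mem_biUnion (hfin.mem_toFinset.2 ⟨hp, mem_closedBall.2 hpx⟩)
      (mem_ball.2 (dist_comm y p ▸ hyp))
  calc (ν (ball x R)).toReal ≤ (∑ p ∈ t, ν (ball p ε)).toReal :=
        ENNReal.toReal_mono (ENNReal.sum_ne_top.2 fun p _ => (hbdd _ isBounded_ball).ne)
          ((measure_mono hcover).trans (measure_biUnion_finset_le t _))
    _ = ∑ p ∈ t, (ν (ball p ε)).toReal := ENNReal.toReal_sum fun p _ => (hbdd _ isBounded_ball).ne
    _ ≤ ∑ _p ∈ t, M := Finset.sum_le_sum fun p _ => hM p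
    _ = (𝒩 ∩ closedBall x (R + ε)).ncard * M := by
      rw [Finset.sum_const, nsmul_eq_mul, Set.ncard_eq_toFinset_card _ hfin]

section Packing

variable [MeasurableSpace X] [OpensMeasurableSpace X] {ν : Measure X} {m : ℝ}

lemma IsSeparated.ncard_mul_le_measure_ball (hsep : IsSeparated 𝒩 ε)
    (hbdd : ∀ s : Set X, Bornology.IsBounded s → ν s < ⊤)
    (hm : ∀ y : X, m ≤ (ν (ball y (ε / 2))).toReal) (x : X) {R : ℝ} {t : Set X}
    (ht : t.Finite) (htN : t ⊆ 𝒩 ∩ closedBall x R) :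
    t.ncard * m ≤ (ν (ball x (R + ε / 2))).toReal := by
  lift t to Finset X using ht
  have hdisj : (t : Set X).PairwiseDisjoint (fun p => ball p (ε / 2)) := fun p hp q hq hpq =>
    ball_disjoint_ball (by linarith [hsep p (htN hp).1 q (htN hq).1 hpq])
  have hsub : ⋃ p ∈ t, ball p (ε / 2) ⊆ ball x (R + ε / 2) := Set.iUnion₂_subset fun p hp =>
    ball_subset_ball' (by linarith [mem_closedBall.1 (htN hp).2])
  calc (t : Set X).ncard * m = ∑ _p ∈ t, m := by simp
    _ ≤ ∑ p ∈ t, (ν (ball p (ε / 2))).toReal := Finset.sum_le_sum fun p _ => hm p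
    _ = (ν (⋃ p ∈ t, ball p (ε / 2))).toReal := by
      rw [measure_biUnion_finset hdisj fun _ _ => measurableSet_ball,
        ENNReal.toReal_sum fun p _ => (hbdd _ isBounded_ball).ne]
    _ ≤ (ν (ball x (R + ε / 2))).toReal :=
      ENNReal.toReal_mono (hbdd _ isBounded_ball).ne (measure_mono hsub)

lemma IsSeparated.finite_inter_closedBall (hsep : IsSeparated 𝒩 ε)
    (hbdd : ∀ s : Set X, Bornology.IsBounded s → ν s < ⊤) (hm0 : 0 < m)
    (hm : ∀ y : X, m ≤ (ν (ball y (ε / 2))).toReal) (x : X) (R : ℝ) :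
    (𝒩 ∩ closedBall x R).Finite := by
  by_contra hinf
  set V := (ν (ball x (R + ε / 2))).toReal
  obtain ⟨t, htN, htfin, htcard⟩ := Set.Infinite.exists_subset_ncard_eq hinf (⌈V / m⌉₊ + 1)
  have h := hsep.ncard_mul_le_measure_ball hbdd hm x htfin htN
  rw [htcard, Nat.cast_add_one] at h
  have hV := (div_le_iff₀ hm0).1 (Nat.le_ceil (V / m))
  linarith

lemma IsSeparated.exists_encard_inter_closedBall_le (hsep : IsSeparated 𝒩 ε)
    (hbdd : ∀ s : Set X, Bornology.IsBounded s → ν s < ⊤) (hm0 : 0 < m)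
    (hm : ∀ y : X, m ≤ (ν (ball y (ε / 2))).toReal) {R M : ℝ}
    (hM : ∀ x : X, (ν (ball x (R + ε / 2))).toReal ≤ M) :
    ∃ P : ℕ, ∀ x : X, (𝒩 ∩ closedBall x R).encard ≤ P := by
  refine ⟨⌊M / m⌋₊, fun x => Set.encard_le_coe_iff_finite_ncard_le.2 ⟨?_, ?_⟩⟩
  · exact hsep.finite_inter_closedBall hbdd hm0 hm x R
  · have hfin := hsep.finite_inter_closedBall hbdd hm0 hm x R
    refine Nat.le_floor ((le_div_iff₀ hm0).2 ?_)
    exact (hsep.ncard_mul_le_measure_ball hbdd hm x hfin subset_rfl).trans (hM x)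

end Packing

end Net

section LastExitTime

variable {X : Type*} [MetricSpace X] {f : ℝ → X} {D ε s : ℝ} {u : X}

noncomputable def lastExitTime (f : ℝ → X) (D ε : ℝ) (u : X) : ℝ :=
  sSup {s ∈ Set.Icc 0 D | dist u (f s) < ε}

lemma le_lastExitTime (hs : s ∈ Set.Icc 0 D) (hu : dist u (f s) < ε) :
    s ≤ lastExitTime f D ε u :=
  le_csSup ⟨D, fun _ ht => ht.1.2⟩ ⟨hs, hu⟩

lemma lastExitTime_mem_Icc (hs : s ∈ Set.Icc 0 D) (hu : dist u (f s) < ε) :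
    lastExitTime f D ε u ∈ Set.Icc 0 D :=
  ⟨hs.1.trans (le_lastExitTime hs hu), csSup_le ⟨s, hs, hu⟩ fun _ ht => ht.1.2⟩

lemma dist_lastExitTime_le (hf : LipschitzOnWith 1 f (Set.Icc 0 D)) (hs : s ∈ Set.Icc 0 D)
    (hu : dist u (f s) < ε) : dist u (f (lastExitTime f D ε u)) ≤ ε := by
  set τ := lastExitTime f D ε u
  refine le_of_forall_pos_le_add fun δ hδ => ?_
  have hne : {t ∈ Set.Icc 0 D | dist u (f t) < ε}.Nonempty := ⟨s, hs, hu⟩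
  obtain ⟨t, ⟨ht, htu⟩, hτt⟩ := exists_lt_of_lt_csSup hne (sub_lt_self τ hδ)
  have htτ : t ≤ τ := le_lastExitTime ht htu
  have hft := hf.dist_le_mul t ht τ (lastExitTime_mem_Icc hs hu)
  rw [NNReal.coe_one, one_mul, Real.dist_eq, abs_sub_comm, abs_of_nonneg (by linarith)] at hft
  linarith [dist_triangle u (f t) (f τ)]

lemma lt_lastExitTime (hf : LipschitzOnWith 1 f (Set.Icc 0 D)) (hs : s ∈ Set.Icc 0 D)
    (hsD : s < D) (hu : dist u (f s) < ε) : s < lastExitTime f D ε u := by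
  obtain ⟨δ, hδ, hδε, hδD⟩ : ∃ δ > 0, δ < ε - dist u (f s) ∧ δ ≤ D - s :=
    ⟨min (ε - dist u (f s)) (D - s) / 2, by positivity,
      by linarith [min_le_left (ε - dist u (f s)) (D - s), sub_pos.2 hu],
      by linarith [min_le_right (ε - dist u (f s)) (D - s), sub_pos.2 hsD]⟩
  have hsδ : s + δ ∈ Set.Icc 0 D := ⟨by linarith [hs.1], by linarith⟩
  have hfs := hf.dist_le_mul s hs (s + δ) hsδ
  rw [NNReal.coe_one, one_mul, Real.dist_eq, sub_add_cancel_left, abs_neg, abs_of_pos hδ] at hfs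
  have hnear : dist u (f (s + δ)) < ε := by linarith [dist_triangle u (f s) (f (s + δ))]
  linarith [le_lastExitTime hsδ hnear]

end LastExitTime

section Chain

variable {X : Type*} [MetricSpace X] {𝒩 : Set X} {ε : ℝ} {f : ℝ → X} {D : ℝ}

lemma exists_netGraph_walk_length_le_ncard (hε : 0 < ε) (hcov : ∀ x : X, ∃ p ∈ 𝒩, dist x p < ε)
    (hf : LipschitzOnWith 1 f (Set.Icc 0 D)) (hD : 0 ≤ D) {p q : 𝒩} (hp : f 0 = p) (hq : f D = q)
    (hT : {u : 𝒩 | ∃ s ∈ Set.Icc 0 D, dist (u : X) (f s) < ε}.Finite) :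
    ∃ W : (netGraph 𝒩 ε).Walk p q,
      W.length ≤ {u : 𝒩 | ∃ s ∈ Set.Icc 0 D, dist (u : X) (f s) < ε}.ncard := by
  -- The potential is the last exit time: jumping to a net point near `f (lastExitTime w)` raises it.
  refine (netGraph 𝒩 ε).exists_walk_length_le_ncard_of_ascending hT
    (fun u => lastExitTime f D ε u) ?_ ⟨0, ⟨le_rfl, hD⟩, by simpa [hp] using hε⟩
  rintro w ⟨s, hs, hws⟩ hwq
  have hτ := lastExitTime_mem_Icc hs hws
  have hwτ := dist_lastExitTime_le hf hs hws
  rcases hτ.2.lt_or_eq with hlt | heq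
  · obtain ⟨w', hw', hw'τ⟩ := hcov (f (lastExitTime f D ε w))
    rw [dist_comm] at hw'τ
    have hττ := lt_lastExitTime hf hτ hlt hw'τ
    refine Or.inr ⟨⟨w', hw'⟩, ⟨_, hτ, hw'τ⟩, ⟨?_, ?_⟩, hττ⟩
    · rintro rfl
      exact hττ.false
    · show dist (w : X) w' < 2 * ε
      linarith [dist_triangle (w : X) (f (lastExitTime f D ε w)) w',
        dist_comm w' (f (lastExitTime f D ε w))]
  · refine Or.inl ⟨hwq, ?_⟩
    rw [← hq, ← heq]
    linarith

lemma encard_inter_near_segment_le (hε : 0 < ε) (hf : LipschitzOnWith 1 f (Set.Icc 0 D))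
    {P : ℕ} (hP : ∀ x : X, (𝒩 ∩ closedBall x (2 * ε)).encard ≤ P) :
    (𝒩 ∩ {u | ∃ s ∈ Set.Icc 0 D, dist u (f s) < ε}).encard ≤ (⌊D / ε⌋₊ + 1) * P := by
  have hsub : 𝒩 ∩ {u | ∃ s ∈ Set.Icc 0 D, dist u (f s) < ε} ⊆
      ⋃ j ∈ Finset.range (⌊D / ε⌋₊ + 1), 𝒩 ∩ closedBall (f (j * ε)) (2 * ε) := by
    rintro u ⟨hu, s, hs, hus⟩
    set j := ⌊s / ε⌋₊
    have hjs : j * ε ≤ s := (le_div_iff₀ hε).1 (Nat.floor_le (div_nonneg hs.1 hε.le))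
    have hsj : s < j * ε + ε := by
      have := (div_lt_iff₀ hε).1 (Nat.lt_floor_add_one (s / ε))
      linarith
    have hj : (j : ℝ) * ε ∈ Set.Icc 0 D := ⟨by positivity, hjs.trans hs.2⟩
    have hjD : j < ⌊D / ε⌋₊ + 1 :=
      Nat.lt_succ_of_le (Nat.floor_le_floor (div_le_div_of_nonneg_right hs.2 hε.le))
    have hfs := hf.dist_le_mul s hs _ hj
    rw [NNReal.coe_one, one_mul, Real.dist_eq, abs_of_nonneg (by linarith)] at hfs
    refine Set.mem_biUnion (Finset.mem_range.2 hjD) ⟨hu, ?_⟩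
    rw [mem_closedBall]
    linarith [dist_triangle u (f s) (f (j * ε))]
  calc _ ≤ _ := Set.encard_le_encard hsub
    _ ≤ ∑ j ∈ Finset.range (⌊D / ε⌋₊ + 1), (𝒩 ∩ closedBall (f (j * ε)) (2 * ε)).encard :=
      Finset.set_encard_biUnion_le _ _
    _ ≤ ∑ _j ∈ Finset.range (⌊D / ε⌋₊ + 1), (P : ℕ∞) := Finset.sum_le_sum fun j _ => hP _
    _ = _ := by simp

variable {P : ℕ}

lemma exists_netGraph_walk_length_le (hgeo : IsGeodesicSpace X) (hε : 0 < ε)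
    (hcov : ∀ x : X, ∃ p ∈ 𝒩, dist x p < ε) (hP : ∀ x : X, (𝒩 ∩ closedBall x (2 * ε)).encard ≤ P)
    (p q : 𝒩) : ∃ W : (netGraph 𝒩 ε).Walk p q, W.length ≤ (⌊dist (p : X) q / ε⌋₊ + 1) * P := by
  obtain ⟨f, hf0, hfD, hiso⟩ := hgeo p q
  have hf : LipschitzOnWith 1 f (Set.Icc 0 (dist (p : X) q)) :=
    LipschitzOnWith.mk_one fun s hs t ht => (hiso s hs t ht).le
  set T := {u : 𝒩 | ∃ s ∈ Set.Icc 0 (dist (p : X) q), dist (u : X) (f s) < ε}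
  have hT : T.encard ≤ ((⌊dist (p : X) q / ε⌋₊ + 1) * P : ℕ) := by
    rw [← Subtype.val_injective.injOn.encard_image, Nat.cast_mul]
    refine le_trans (Set.encard_le_encard ?_) (encard_inter_near_segment_le hε hf hP)
    rintro _ ⟨u, hu, rfl⟩
    exact ⟨u.2, hu⟩
  obtain ⟨hTfin, hTcard⟩ := Set.encard_le_coe_iff_finite_ncard_le.1 hT
  obtain ⟨W, hW⟩ := exists_netGraph_walk_length_le_ncard hε hcov hf dist_nonneg hf0 hfD hTfin
  exact ⟨W, hW.trans hTcard⟩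

end Chain

section NetGraphDist

variable {X : Type*} [MetricSpace X] {𝒩 : Set X} {ε : ℝ} {P : ℕ}

lemma netGraph_preconnected (hgeo : IsGeodesicSpace X) (hε : 0 < ε)
    (hcov : ∀ x : X, ∃ p ∈ 𝒩, dist x p < ε) (hP : ∀ x : X, (𝒩 ∩ closedBall x (2 * ε)).encard ≤ P) :
    (netGraph 𝒩 ε).Preconnected := fun p q =>
  ⟨(exists_netGraph_walk_length_le hgeo hε hcov hP p q).choose⟩

lemma netGraph_dist_le (hgeo : IsGeodesicSpace X) (hε : 0 < ε)
    (hcov : ∀ x : X, ∃ p ∈ 𝒩, dist x p < ε) (hP : ∀ x : X, (𝒩 ∩ closedBall x (2 * ε)).encard ≤ P)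
    (p q : 𝒩) :
    ((netGraph 𝒩 ε).dist p q : ℝ) ≤ (P + 1) / ε * dist (p : X) q + (P + 1) := by
  obtain ⟨W, hW⟩ := exists_netGraph_walk_length_le hgeo hε hcov hP p q
  have hfloor := Nat.floor_le (div_nonneg (dist_nonneg (x := (p : X)) (y := q)) hε.le)
  calc ((netGraph 𝒩 ε).dist p q : ℝ) ≤ W.length := by exact_mod_cast SimpleGraph.dist_le W
    _ ≤ (⌊dist (p : X) q / ε⌋₊ + 1) * P := by exact_mod_cast hW
    _ ≤ (dist (p : X) q / ε + 1) * (P + 1) := by gcongr; linarith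
    _ = (P + 1) / ε * dist (p : X) q + (P + 1) := by ring

lemma dist_le_netGraph_dist {p q : 𝒩} (h : (netGraph 𝒩 ε).Reachable p q) :
    dist (p : X) q ≤ 2 * ε * (netGraph 𝒩 ε).dist p q := by
  obtain ⟨W, hW⟩ := h.exists_walk_length_eq_dist
  exact hW ▸ dist_le_of_netGraph_walk W

lemma image_netGraph_ball_subset (hε : 0 ≤ ε) (hpre : (netGraph 𝒩 ε).Preconnected) (p₀ : 𝒩)
    (r : ℝ) : Subtype.val '' {v : 𝒩 | ((netGraph 𝒩 ε).dist p₀ v : ℝ) ≤ r} ⊆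
      𝒩 ∩ closedBall (p₀ : X) (2 * ε * r) := by
  rintro _ ⟨v, hv, rfl⟩
  refine ⟨v.2, mem_closedBall.2 ?_⟩
  rw [dist_comm]
  calc dist (p₀ : X) v ≤ 2 * ε * (netGraph 𝒩 ε).dist p₀ v := dist_le_netGraph_dist (hpre p₀ v)
    _ ≤ 2 * ε * r := by gcongr; exact hv

end NetGraphDist

-- `VolumePolyGrowth ν x₀` and `GraphPolyGrowth G v₀` unfold to this for the ball-size function.
def IsPolyBounded (F : ℝ → ℝ) : Prop :=
  ∃ C > (0:ℝ), ∃ k > (0:ℝ), ∃ r₁ > (0:ℝ), ∀ r : ℝ, r₁ ≤ r → F r ≤ C * r ^ k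

lemma IsPolyBounded.of_le_comp_affine {F G : ℝ → ℝ} (hF : IsPolyBounded F) {A a b : ℝ}
    (hA : 0 ≤ A) (ha : 0 < a) (hb : 0 ≤ b) (hGF : ∀ r ≥ 1, G r ≤ A * F (a * r + b)) :
    IsPolyBounded G := by
  obtain ⟨C, hC, k, hk, r₁, -, hFr⟩ := hF
  refine ⟨(A + 1) * C * (a + b) ^ k, by positivity, k, hk, max 1 (r₁ / a), by positivity,
    fun r hr => ?_⟩
  have hr1 : 1 ≤ r := (le_max_left _ _).trans hr
  have hr₁r : r₁ ≤ a * r + b := by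
    have := (div_le_iff₀ ha).1 ((le_max_right _ _).trans hr)
    linarith
  calc G r ≤ A * F (a * r + b) := hGF r hr1
    _ ≤ A * (C * (a * r + b) ^ k) := by gcongr; exact hFr _ hr₁r
    _ ≤ (A + 1) * (C * ((a + b) * r) ^ k) := by
      gcongr
      · linarith
      · nlinarith
    _ = (A + 1) * C * (a + b) ^ k * r ^ k := by
      rw [Real.mul_rpow (by linarith) (by linarith)]
      ring

section PolynomialGrowth

variable {X : Type*} [MetricSpace X] [MeasurableSpace X] {ν : Measure X} {𝒩 : Set X} {ε : ℝ}

theorem graphPolyGrowth_netGraph_of_volumePolyGrowth [OpensMeasurableSpace X] {m : ℝ}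
    (hε : 0 < ε) (hsep : IsSeparated 𝒩 ε) (hbdd : ∀ s : Set X, Bornology.IsBounded s → ν s < ⊤)
    (hm0 : 0 < m) (hm : ∀ y : X, m ≤ (ν (ball y (ε / 2))).toReal)
    (hpre : (netGraph 𝒩 ε).Preconnected) {x₀ : X} (p₀ : 𝒩) (h : VolumePolyGrowth ν x₀) :
    GraphPolyGrowth (netGraph 𝒩 ε) p₀ := by
  refine IsPolyBounded.of_le_comp_affine (F := fun r => (ν (ball x₀ r)).toReal) h
    (A := 1 / m) (a := 2 * ε) (b := ε / 2 + dist (p₀ : X) x₀) (by positivity) (by positivity)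
    (by positivity) fun r _ => ?_
  have hS := hsep.finite_inter_closedBall hbdd hm0 hm p₀ (2 * ε * r)
  calc (({v : 𝒩 | ((netGraph 𝒩 ε).dist p₀ v : ℝ) ≤ r}.ncard : ℕ) : ℝ)
      = (Subtype.val '' {v : 𝒩 | ((netGraph 𝒩 ε).dist p₀ v : ℝ) ≤ r}).ncard := by
        rw [Set.ncard_image_of_injective _ Subtype.val_injective]
    _ ≤ (𝒩 ∩ closedBall (p₀ : X) (2 * ε * r)).ncard := by
        exact_mod_cast Set.ncard_le_ncard (image_netGraph_ball_subset hε.le hpre p₀ r) hS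
    _ ≤ 1 / m * (ν (ball (p₀ : X) (2 * ε * r + ε / 2))).toReal := by
        rw [div_mul_eq_mul_div, le_div_iff₀ hm0, one_mul]
        exact hsep.ncard_mul_le_measure_ball hbdd hm p₀ hS subset_rfl
    _ ≤ 1 / m * (ν (ball x₀ (2 * ε * r + (ε / 2 + dist (p₀ : X) x₀)))).toReal := by
        refine mul_le_mul_of_nonneg_left (ENNReal.toReal_mono (hbdd _ isBounded_ball).ne
          (measure_mono (ball_subset_ball' ?_))) (by positivity)
        linarith

theorem volumePolyGrowth_of_graphPolyGrowth_netGraph (hε : 0 < ε)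
    (hcov : ∀ x : X, ∃ p ∈ 𝒩, dist x p < ε) (hbdd : ∀ s : Set X, Bornology.IsBounded s → ν s < ⊤)
    {M : ℝ} (hM : ∀ p : X, (ν (ball p ε)).toReal ≤ M)
    (hfin : ∀ (x : X) (R : ℝ), (𝒩 ∩ closedBall x R).Finite) (hpre : (netGraph 𝒩 ε).Preconnected)
    {a b : ℝ} (ha : 0 < a) (hb : 0 ≤ b)
    (hdist : ∀ p q : 𝒩, ((netGraph 𝒩 ε).dist p q : ℝ) ≤ a * dist (p : X) q + b) (x₀ : X)
    {p₀ : 𝒩} (h : GraphPolyGrowth (netGraph 𝒩 ε) p₀) : VolumePolyGrowth ν x₀ := by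
  have hM0 : 0 ≤ M := ENNReal.toReal_nonneg.trans (hM x₀)
  refine IsPolyBounded.of_le_comp_affine
    (F := fun r => (({v : 𝒩 | ((netGraph 𝒩 ε).dist p₀ v : ℝ) ≤ r}.ncard : ℕ) : ℝ)) h
    (A := M) (a := a) (b := a * (dist (p₀ : X) x₀ + ε) + b) hM0 ha (by positivity)
    fun R _ => ?_
  set ρ := a * R + (a * (dist (p₀ : X) x₀ + ε) + b)
  have hball : (Subtype.val '' {v : 𝒩 | ((netGraph 𝒩 ε).dist p₀ v : ℝ) ≤ ρ}).Finite :=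
    (hfin _ _).subset (image_netGraph_ball_subset hε.le hpre p₀ ρ)
  have hsub : 𝒩 ∩ closedBall x₀ (R + ε) ⊆
      Subtype.val '' {v : 𝒩 | ((netGraph 𝒩 ε).dist p₀ v : ℝ) ≤ ρ} := by
    rintro u ⟨hu, hux⟩
    refine ⟨⟨u, hu⟩, ?_, rfl⟩
    have hpu : dist (p₀ : X) u ≤ dist (p₀ : X) x₀ + (R + ε) := by
      linarith [dist_triangle (p₀ : X) x₀ u, dist_comm x₀ u, mem_closedBall.1 hux]
    calc ((netGraph 𝒩 ε).dist p₀ ⟨u, hu⟩ : ℝ) ≤ a * dist (p₀ : X) u + b := hdist _ _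
      _ ≤ ρ := by nlinarith
  calc (ν (ball x₀ R)).toReal ≤ (𝒩 ∩ closedBall x₀ (R + ε)).ncard * M :=
        measure_ball_le_ncard_mul hcov hbdd hM x₀ (hfin _ _)
    _ ≤ M * (Subtype.val '' {v : 𝒩 | ((netGraph 𝒩 ε).dist p₀ v : ℝ) ≤ ρ}).ncard := by
        rw [mul_comm]
        exact mul_le_mul_of_nonneg_left (by exact_mod_cast Set.ncard_le_ncard hsub hball) hM0
    _ = M * ({v : 𝒩 | ((netGraph 𝒩 ε).dist p₀ v : ℝ) ≤ ρ}.ncard : ℕ) := by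
        rw [Set.ncard_image_of_injective _ Subtype.val_injective]

end PolynomialGrowth

theorem stmt_13_general {X : Type*} [MetricSpace X]
    [MeasurableSpace X] [BorelSpace X]
    (hgeo : IsGeodesicSpace X)
    (ν : Measure X)
    (hbdd : ∀ s : Set X, Bornology.IsBounded s → ν s < ⊤)
    (K N : ℝ) (hN : 1 < N)
    (hBG : BishopGromov ν K N)
    (r₀ V₀ V₁ : ℝ) (hr₀ : 0 < r₀) (hV₀ : 0 < V₀)
    (hnc : ∀ x : X, V₀ ≤ (ν (ball x r₀)).toReal ∧ (ν (ball x r₀)).toReal ≤ V₁)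
    (ε : ℝ) (hε : 0 < ε) (𝒩 : Set X) (hnet : IsMaximalNet 𝒩 ε)
    (x₀ : X) (p₀ : 𝒩) :
    VolumePolyGrowth ν x₀ ↔ GraphPolyGrowth (netGraph 𝒩 ε) p₀ := by
  have hcov := hnet.exists_dist_lt hε
  obtain ⟨m, hm0, hm⟩ :=
    hBG.exists_pos_le_measure_ball hbdd hN hr₀ hV₀ (fun x => (hnc x).1) (half_pos hε)
  have hmeas_le := hBG.exists_measure_ball_le hbdd hN hr₀ (fun x => (hnc x).2)
  obtain ⟨M₂, hM₂⟩ := hmeas_le (2 * ε + ε / 2)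
  obtain ⟨P, hP⟩ := hnet.1.exists_encard_inter_closedBall_le hbdd hm0 hm hM₂
  obtain ⟨M, hM⟩ := hmeas_le ε
  have hpre := netGraph_preconnected hgeo hε hcov hP
  exact ⟨graphPolyGrowth_netGraph_of_volumePolyGrowth hε hnet.1 hbdd hm0 hm hpre p₀,
    volumePolyGrowth_of_graphPolyGrowth_netGraph hε hcov hbdd hM
      (hnet.1.finite_inter_closedBall hbdd hm0 hm) hpre (by positivity) (by positivity)
      (netGraph_dist_le hgeo hε hcov hP) x₀⟩

theorem stmt_13 {X : Type*} [MetricSpace X] [ProperSpace X]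
    [MeasurableSpace X] [BorelSpace X]
    (hgeo : IsGeodesicSpace X)
    (ν : Measure X)
    (hfull : ∀ x : X, ∀ r > (0:ℝ), 0 < ν (ball x r))
    (hbdd : ∀ s : Set X, Bornology.IsBounded s → ν s < ⊤)
    (K N : ℝ) (hK : K ≤ 0) (hN : 1 < N)
    (hBG : BishopGromov ν K N)
    (r₀ V₀ V₁ : ℝ) (hr₀ : 0 < r₀) (hV₀ : 0 < V₀) (hV₁ : 0 < V₁)
    (hnc : ∀ x : X, V₀ ≤ (ν (ball x r₀)).toReal ∧ (ν (ball x r₀)).toReal ≤ V₁)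
    (ε : ℝ) (hε : 0 < ε) (𝒩 : Set X) (hnet : IsMaximalNet 𝒩 ε)
    (x₀ : X) (p₀ : 𝒩) :
    VolumePolyGrowth ν x₀ ↔ GraphPolyGrowth (netGraph 𝒩 ε) p₀ :=
  stmt_13_general hgeo ν hbdd K N hN hBG r₀ V₀ V₁ hr₀ hV₀ hnc ε hε 𝒩 hnet x₀ p₀
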